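/- Let N ≥ 1 be an integer and let α ≥ 1, β ≥ 1 and σ be real numbers with 0 < σ ≤ min{α, β}. Then there exists a constant C > 0, depending only on N, α, β, σ, such that for all distinct points a, b ∈ ℝ^N and every y ∈ ℝ^N one has (1+|y−a|)^{−α} (1+|y−b|)^{−β} ≤ (C/|a−b|^σ) · ( (1+|y−a|)^{−(α+β−σ)} + (1+|y−b|)^{−(α+β−σ)} ). -/
import Mathlib

private lemma key_aux (α β σ : ℝ) (hσ0 : 0 < σ) (hσα : σ ≤ α) (hσβ : σ ≤ β)
    (u v d : ℝ) (hv : 0 ≤ v) (hd : 0 < d) (hvu : v ≤ u) (hduv : d ≤ u + v) :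
    (1 + u) ^ (-α) * (1 + v) ^ (-β) ≤
      2 ^ σ / d ^ σ * ((1 + u) ^ (-(α + β - σ)) + (1 + v) ^ (-(α + β - σ))) := by
  have hu : 0 ≤ u := le_trans hv hvu
  have hu1 : (0:ℝ) < 1 + u := by linarith
  have hv1 : (0:ℝ) < 1 + v := by linarith
  have hd2 : d / 2 ≤ 1 + u := by linarith
  have h1 : (1 + u) ^ (-σ) ≤ (d / 2) ^ (-σ) :=
    Real.rpow_le_rpow_of_nonpos (by positivity) hd2 (by linarith)
  have h2 : (1 + u) ^ (-(α - σ)) ≤ (1 + v) ^ (-(α - σ)) :=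
    Real.rpow_le_rpow_of_nonpos hv1 (by linarith) (by linarith)
  have hsplit : (1 + u) ^ (-α) = (1 + u) ^ (-σ) * (1 + u) ^ (-(α - σ)) := by
    rw [← Real.rpow_add hu1]; ring_nf
  have hmerge : (1 + v) ^ (-(α - σ)) * (1 + v) ^ (-β) = (1 + v) ^ (-(α + β - σ)) := by
    rw [← Real.rpow_add hv1]; ring_nf
  have hdiv : (d / 2) ^ (-σ) = 2 ^ σ / d ^ σ := by
    rw [Real.rpow_neg (by positivity), Real.div_rpow hd.le (by norm_num)]
    field_simp
  have hb : (0:ℝ) ≤ (1 + v) ^ (-β) := by positivity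
  have hchain : (1 + u) ^ (-α) * (1 + v) ^ (-β) ≤ 2 ^ σ / d ^ σ * (1 + v) ^ (-(α + β - σ)) := by
    calc (1 + u) ^ (-α) * (1 + v) ^ (-β)
        = (1 + u) ^ (-σ) * ((1 + u) ^ (-(α - σ)) * (1 + v) ^ (-β)) := by
          rw [hsplit]; ring
      _ ≤ (d / 2) ^ (-σ) * ((1 + v) ^ (-(α - σ)) * (1 + v) ^ (-β)) := by
          apply mul_le_mul h1 (mul_le_mul_of_nonneg_right h2 hb) (by positivity) (by positivity)
      _ = 2 ^ σ / d ^ σ * (1 + v) ^ (-(α + β - σ)) := by rw [hmerge, hdiv]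
  have hpos : (0:ℝ) ≤ 2 ^ σ / d ^ σ * (1 + u) ^ (-(α + β - σ)) := by positivity
  linarith [hchain, hpos]

/-- For `N ≥ 1`, `α, β ≥ 1` and `0 < σ ≤ min α β`, there is `C > 0`
such that for all distinct `a b : ℝ^N` and every `y : ℝ^N`,
`(1+|y−a|)^{−α} (1+|y−b|)^{−β} ≤ (C/|a−b|^σ) ((1+|y−a|)^{−(α+β−σ)} + (1+|y−b|)^{−(α+β−σ)})`. -/
theorem stmt_0 (N : ℕ) (hN : 1 ≤ N) (α β σ : ℝ) (hα : 1 ≤ α) (hβ : 1 ≤ β)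
    (hσ0 : 0 < σ) (hσ : σ ≤ min α β) :
    ∃ C > 0, ∀ a b y : EuclideanSpace ℝ (Fin N), a ≠ b →
      (1 + ‖y - a‖) ^ (-α) * (1 + ‖y - b‖) ^ (-β) ≤
        C / ‖a - b‖ ^ σ *
          ((1 + ‖y - a‖) ^ (-(α + β - σ)) + (1 + ‖y - b‖) ^ (-(α + β - σ))) := by
  obtain ⟨hσα, hσβ⟩ := le_min_iff.mp hσ
  refine ⟨2 ^ σ, by positivity, fun a b y hab => ?_⟩
  have hd : 0 < ‖a - b‖ := norm_sub_pos_iff.mpr hab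
  have htri : ‖a - b‖ ≤ ‖y - a‖ + ‖y - b‖ := by
    have := norm_sub_le_norm_sub_add_norm_sub a y b
    calc ‖a - b‖ ≤ ‖a - y‖ + ‖y - b‖ := this
      _ = ‖y - a‖ + ‖y - b‖ := by rw [norm_sub_rev a y]
  rcases le_total ‖y - b‖ ‖y - a‖ with h | h
  · exact key_aux α β σ hσ0 hσα hσβ _ _ _ (norm_nonneg _) hd h htri
  · have := key_aux β α σ hσ0 hσβ hσα ‖y - b‖ ‖y - a‖ ‖a - b‖ (norm_nonneg _) hd h
      (by linarith)
    have e : β + α - σ = α + β - σ := by ring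
    rw [e] at this
    linarith [this]
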